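/- For every f ∈ L²(ℝ) and every z ∈ ℂ, the integrand t ↦ f(t) e^{2πtz − πt² − (π/2)z²} is integrable over ℝ, so the Bargmann transform Bf(z) is well defined, and the function z ↦ Bf(z) is entire on ℂ. -/

import Mathlib

/-! The Gaussian `e^{-πt²}` absorbs every exponential `e^{ct}`, so `t ↦ e^{2πtz - πt²}` lies in
`L²(ℝ)` and pairs integrably with `f` by Cauchy–Schwarz. It also absorbs the factor `t` produced by
differentiating in `z`, locally uniformly in `z`, so differentiation under the integral sign shows
that `z ↦ ∫ f(t) e^{2πtz - πt²} dt` is entire; `Bf(z)` is this function times `2^{1/4} e^{-πz²/2}`.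
-/

open MeasureTheory Complex
/-- The Bargmann transform of `f : ℝ → ℂ`:
`Bf(z) = 2^{1/4} ∫ f(t) e^{2πtz - πt² - (π/2)z²} dt`. -/
noncomputable def bargmannTransform (f : ℝ → ℂ) (z : ℂ) : ℂ :=
  (((2 : ℝ) ^ ((1 : ℝ) / 4) : ℝ) : ℂ) *
    ∫ t : ℝ, f t * Complex.exp (2 * (Real.pi : ℂ) * (t : ℂ) * z -
      (Real.pi : ℂ) * (t : ℂ) ^ 2 - (Real.pi : ℂ) / 2 * z ^ 2)

theorem memLp_two_cexp_quadratic {b : ℂ} (hb : 0 < b.re) (c d : ℂ) :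
    MemLp (fun x : ℝ => cexp (-b * x ^ 2 + c * x + d)) 2 := by
  have hmeas : AEStronglyMeasurable (fun x : ℝ => cexp (-b * x ^ 2 + c * x + d)) :=
    (by fun_prop : Continuous _).aestronglyMeasurable
  refine (memLp_two_iff_integrable_sq_norm hmeas).2 <|
    (integrable_cexp_quadratic (by simpa using hb : 0 < (2 * b).re) (2 * c) (2 * d)).norm.congr
      (ae_of_all _ fun x => ?_)
  simp only [norm_exp, ← Real.exp_nat_mul]
  congr 1
  simp only [add_re, mul_re, neg_re, neg_im, ← ofReal_pow, ofReal_re, ofReal_im]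
  norm_num
  ring

theorem integrable_mul_cexp_quadratic {f : ℝ → ℂ} (hf : MemLp f 2) {b : ℂ} (hb : 0 < b.re)
    (c d : ℂ) : Integrable (fun x : ℝ => f x * cexp (-b * x ^ 2 + c * x + d)) :=
  hf.integrable_mul (memLp_two_cexp_quadratic hb c d)

theorem norm_cexp_neg_mul_sq_add_mul (b c : ℂ) (x : ℝ) :
    ‖cexp (-b * x ^ 2 + c * x)‖ = Real.exp (-b.re * x ^ 2 + c.re * x) := by
  simp [norm_exp, ← ofReal_pow]

theorem abs_mul_exp_le_exp_add_exp {a S : ℝ} (h : |a| + 1 ≤ S) (x : ℝ) :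
    |x| * Real.exp (a * x) ≤ Real.exp (S * x) + Real.exp (-S * x) := by
  have habs : |x| ≤ Real.exp |x| := by linarith [Real.add_one_le_exp |x|]
  have hlin : a * x ≤ |a| * |x| := (le_abs_self _).trans (abs_mul a x).le
  calc |x| * Real.exp (a * x) ≤ Real.exp |x| * Real.exp (|a| * |x|) :=
        mul_le_mul habs (Real.exp_le_exp.2 hlin) (Real.exp_nonneg _) (Real.exp_nonneg _)
    _ = Real.exp ((|a| + 1) * |x|) := by rw [← Real.exp_add]; ring_nf
    _ ≤ Real.exp (S * |x|) := Real.exp_le_exp.2 (mul_le_mul_of_nonneg_right h (abs_nonneg x))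
    _ ≤ Real.exp (S * x) + Real.exp (-S * x) := by
        rcases abs_cases x with ⟨hx, -⟩ | ⟨hx, -⟩ <;> rw [hx]
        · linarith [Real.exp_nonneg (-S * x)]
        · rw [mul_neg, ← neg_mul]; linarith [Real.exp_nonneg (S * x)]

theorem norm_cexp_quadratic_mul_le {z : ℂ} {S : ℝ} (h : |z.re| + 1 ≤ S) (b : ℂ) (x : ℝ) :
    ‖cexp (-b * x ^ 2 + z * x) * x‖ ≤
      ‖cexp (-b * x ^ 2 + S * x)‖ + ‖cexp (-b * x ^ 2 + (-S : ℝ) * x)‖ := by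
  simp only [norm_mul, norm_cexp_neg_mul_sq_add_mul, norm_real, Real.norm_eq_abs, ofReal_re,
    Real.exp_add]
  nlinarith [abs_mul_exp_le_exp_add_exp h x, Real.exp_pos (-b.re * x ^ 2)]

theorem differentiable_integral_mul_cexp_quadratic {f : ℝ → ℂ} (hf : MemLp f 2) {b : ℂ}
    (hb : 0 < b.re) : Differentiable ℂ (fun z : ℂ => ∫ x : ℝ, f x * cexp (-b * x ^ 2 + z * x)) := by
  intro z₀
  set S : ℝ := ‖z₀‖ + 2
  have hre : ∀ z ∈ Metric.ball z₀ 1, |z.re| + 1 ≤ S := fun z hz => by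
    have := norm_sub_norm_le z z₀
    linarith [abs_re_le_norm z, mem_ball_iff_norm.1 hz]
  have hint : ∀ c : ℂ, Integrable (fun x : ℝ => f x * cexp (-b * x ^ 2 + c * x)) := fun c => by
    simpa only [add_zero] using integrable_mul_cexp_quadratic hf hb c 0
  have hderiv : ∀ (x : ℝ) (z : ℂ), HasDerivAt (fun w : ℂ => f x * cexp (-b * x ^ 2 + w * x))
      (f x * (cexp (-b * x ^ 2 + z * x) * x)) z := fun x z =>
    (((hasDerivAt_mul_const (x : ℂ)).const_add _).cexp).const_mul (f x)
  refine (hasDerivAt_integral_of_dominated_loc_of_deriv_le (Metric.ball_mem_nhds z₀ one_pos)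
    (.of_forall fun z => (hint z).aestronglyMeasurable) (hint z₀)
    (hf.1.mul (by fun_prop : Continuous _).aestronglyMeasurable)
    (bound := fun x => ‖f x * cexp (-b * x ^ 2 + S * x)‖ +
      ‖f x * cexp (-b * x ^ 2 + (-S : ℝ) * x)‖)
    (ae_of_all _ fun x z hz => ?_) ((hint _).norm.add (hint _).norm)
    (ae_of_all _ fun x z _ => hderiv x z)).2.differentiableAt
  rw [norm_mul, norm_mul (f x), norm_mul (f x), ← mul_add]
  exact mul_le_mul_of_nonneg_left (norm_cexp_quadratic_mul_le (hre z hz) b x) (norm_nonneg _)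

/-- For `f ∈ L²(ℝ)`, the Bargmann integrand is integrable over `ℝ` for every `z ∈ ℂ`
(so `Bf(z)` is well defined), and `z ↦ Bf(z)` is entire. -/
theorem bargmann_well_defined_and_entire (f : ℝ → ℂ)
    (hf : MeasureTheory.MemLp f 2 (volume : Measure ℝ)) :
    (∀ z : ℂ, Integrable (fun t : ℝ => f t * Complex.exp (2 * (Real.pi : ℂ) * (t : ℂ) * z -
      (Real.pi : ℂ) * (t : ℂ) ^ 2 - (Real.pi : ℂ) / 2 * z ^ 2)) (volume : Measure ℝ)) ∧
    Differentiable ℂ (bargmannTransform f) := by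
  have hπ : 0 < (Real.pi : ℂ).re := by simpa using Real.pi_pos
  refine ⟨fun z => ?_, ?_⟩
  · convert integrable_mul_cexp_quadratic hf hπ (2 * Real.pi * z) (-(Real.pi / 2 * z ^ 2))
      using 4
    ring
  · have hkernel : ∀ (z : ℂ) (t : ℝ), cexp (2 * Real.pi * t * z - Real.pi * t ^ 2 -
        Real.pi / 2 * z ^ 2) = cexp (-Real.pi * t ^ 2 + (2 * Real.pi * z) * t) *
          cexp (-(Real.pi / 2 * z ^ 2)) := fun z t => by
      rw [← Complex.exp_add]; ring_nf
    have hB : bargmannTransform f = fun z => ((2 : ℝ) ^ ((1 : ℝ) / 4) : ℝ) *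
        ((∫ t : ℝ, f t * cexp (-Real.pi * t ^ 2 + (2 * Real.pi * z) * t)) *
          cexp (-(Real.pi / 2 * z ^ 2))) := by
      ext z
      simp only [bargmannTransform, hkernel, ← mul_assoc, integral_mul_const]
    rw [hB]
    exact ((((differentiable_integral_mul_cexp_quadratic hf hπ).comp (by fun_prop)).mul
      (by fun_prop)).const_mul _)
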